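/- Let a = (a_1,...,a_k) be a composition of n with all parts positive. There exists a flattened Fubini ranking of length n with runs of (strict) ascents whose reduced content is a if and only if a_i ≤ i for all 1 ≤ i ≤ k. -/

import Mathlib

/-- A Fubini ranking of length `n`: entries in `{1,...,n}` and every value `v`
appearing satisfies `v = 1 + #{j : r_j < v}`. -/
def IsFubini (n : ℕ) (l : List ℕ) : Prop :=
  l.length = n ∧ (∀ x ∈ l, 1 ≤ x ∧ x ≤ n) ∧
    ∀ v ∈ l, v = 1 + l.countP (fun x => decide (x < v))

/-- Split a list (with given head) into maximal runs w.r.t. relation `R`. -/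
def runsAux (R : ℕ → ℕ → Bool) : ℕ → List ℕ → List (List ℕ)
  | a, [] => [[a]]
  | a, b :: l =>
    match runsAux R b l with
    | (c :: r) :: rest =>
        if R a b then (a :: c :: r) :: rest else [a] :: (c :: r) :: rest
    | rs => [a] :: rs

/-- The maximal runs of a list with respect to the relation `R`. -/
def runs (R : ℕ → ℕ → Bool) : List ℕ → List (List ℕ)
  | [] => []
  | a :: l => runsAux R a l

/-- Maximal runs of weak ascents. -/
def weakRuns (l : List ℕ) : List (List ℕ) := runs (fun a b => decide (a ≤ b)) l

/-- Maximal runs of strict ascents. -/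
def strictRuns (l : List ℕ) : List (List ℕ) := runs (fun a b => decide (a < b)) l

/-- Leading terms of a list of runs. -/
def leadingTerms (rs : List (List ℕ)) : List ℕ := rs.map List.headI

/-- Weakly flattened w.r.t. runs of weak ascents. -/
def WeaklyFlattenedWeak (l : List ℕ) : Prop :=
  (leadingTerms (weakRuns l)).Chain' (· ≤ ·)

/-- Flattened w.r.t. runs of weak ascents. -/
def FlattenedWeak (l : List ℕ) : Prop :=
  (leadingTerms (weakRuns l)).Chain' (· < ·)

/-- Weakly flattened w.r.t. runs of strict ascents. -/
def WeaklyFlattenedStrict (l : List ℕ) : Prop :=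
  (leadingTerms (strictRuns l)).Chain' (· ≤ ·)

/-- Flattened w.r.t. runs of strict ascents. -/
def FlattenedStrict (l : List ℕ) : Prop :=
  (leadingTerms (strictRuns l)).Chain' (· < ·)

/-- The content `(c_1, ..., c_n)` of a tuple of length `n`: `c_i` is the number
of entries equal to `i`. -/
def content (l : List ℕ) : List ℕ :=
  (List.range l.length).map (fun i => l.count (i + 1))

/-- The reduced content: multiplicities of the distinct values, in increasing
order of the values. -/
def reducedContent (l : List ℕ) : List ℕ :=
  (l.toFinset.sort (· ≤ ·)).map (fun v => l.count v)

/-- `a_1` copies of `1`, then `a_2` copies of `1 + a_1`, etc. (auxiliary). -/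
def stairsAux : ℕ → List ℕ → List ℕ
  | _, [] => []
  | s, c :: rest => List.replicate c (s + 1) ++ stairsAux (s + c) rest

/-- The weakly increasing tuple with reduced content `a`. -/
def stairs (a : List ℕ) : List ℕ := stairsAux 0 a

/-!
An increasing run contains each value at most once, and the runs containing a value `v` have
pairwise distinct leading terms (they increase from run to run), each of them a value `≤ v`.
Hence the `i`-th smallest value of a flattened tuple occurs at most `i` times.

Conversely, if `a_j ≤ j` for all `j`, put the Fubini value `v_j = 1 + a_1 + ⋯ + a_{j-1}` into
the `a_j` blocks `j - a_j + 1, …, j`, each block listing its values increasingly. Block `i` starts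
with `v_i`, so the leading terms of the blocks increase; the actual runs are unions of consecutive
blocks, whose leading terms form a sublist of those of the blocks.
-/

section Runs

variable (R : ℕ → ℕ → Bool)

theorem runsAux_eq_cons (a : ℕ) (l : List ℕ) : ∃ r rest, runsAux R a l = (a :: r) :: rest := by
  induction l generalizing a with
  | nil => exact ⟨[], [], rfl⟩
  | cons b l ih =>
    obtain ⟨r, rest, h⟩ := ih b
    by_cases hab : R a b
    · exact ⟨b :: r, rest, by simp [runsAux, h, hab]⟩
    · exact ⟨[], (b :: r) :: rest, by simp [runsAux, h, hab]⟩

theorem runsAux_cons (a b : ℕ) (l : List ℕ) :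
    ∃ r rest, runsAux R b l = (b :: r) :: rest ∧ runsAux R a (b :: l) =
      if R a b then (a :: b :: r) :: rest else [a] :: (b :: r) :: rest := by
  obtain ⟨r, rest, h⟩ := runsAux_eq_cons R b l
  exact ⟨r, rest, h, by simp [runsAux, h]⟩

theorem flatten_runs (l : List ℕ) : (runs R l).flatten = l := by
  cases l with
  | nil => rfl
  | cons a l =>
    induction l generalizing a with
    | nil => rfl
    | cons b l ih =>
      obtain ⟨r, rest, hb, hab⟩ := runsAux_cons R a b l
      have := ih b
      simp only [runs, hb] at this
      by_cases h : R a b <;> simp_all [runs]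

theorem isChain_of_mem_runs {l B : List ℕ} (hB : B ∈ runs R l) :
    B ≠ [] ∧ B.IsChain (R · ·) := by
  cases l with
  | nil => simp [runs] at hB
  | cons a l =>
    induction l generalizing a B with
    | nil => simp_all [runs, runsAux]
    | cons b l ih =>
      obtain ⟨r, rest, hb, hab⟩ := runsAux_cons R a b l
      have hbr := (ih b (B := b :: r) (by simp [runs, hb])).2
      simp only [runs, hab] at hB
      split_ifs at hB with h
      · rcases List.mem_cons.mp hB with rfl | hB
        · exact ⟨List.cons_ne_nil _ _, List.IsChain.cons_cons h hbr⟩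
        · exact ih b (by simp [runs, hb, hB])
      · rcases List.mem_cons.mp hB with rfl | hB
        · simp
        · exact ih b (by simp [runs, hb, hB])

def runBreaks : ℕ → List ℕ → List ℕ
  | _, [] => []
  | a, b :: l => if R a b then runBreaks b l else b :: runBreaks b l

theorem leadingTerms_runsAux (a : ℕ) (l : List ℕ) :
    leadingTerms (runsAux R a l) = a :: runBreaks R a l := by
  induction l generalizing a with
  | nil => rfl
  | cons b l ih =>
    obtain ⟨r, rest, hb, hab⟩ := runsAux_cons R a b l
    have := ih b
    rw [hb] at this
    by_cases h : R a b <;> simp_all [leadingTerms, runBreaks]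

theorem runBreaks_append_of_isChain {a : ℕ} {l₁ : List ℕ} (h : (a :: l₁).IsChain (R · ·))
    (l₂ : List ℕ) : runBreaks R a (l₁ ++ l₂) = runBreaks R ((a :: l₁).getLast (by simp)) l₂ := by
  induction l₁ generalizing a with
  | nil => rfl
  | cons b l₁ ih =>
    rw [List.isChain_cons_cons] at h
    simp [runBreaks, h.1, ih h.2]

theorem runBreaks_flatten_sublist (a : ℕ) (bs : List (List ℕ))
    (hbs : ∀ B ∈ bs, B ≠ [] ∧ B.IsChain (R · ·)) :
    (runBreaks R a bs.flatten).Sublist (leadingTerms bs) := by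
  induction bs generalizing a with
  | nil => simp [runBreaks]
  | cons B bs ih =>
    obtain ⟨⟨b, l, rfl⟩, hB⟩ : (∃ b l, B = b :: l) ∧ B.IsChain (R · ·) := by
      obtain ⟨hne, hB⟩ := hbs B (by simp)
      exact ⟨List.exists_cons_of_ne_nil hne, hB⟩
    have ih' := ih ((b :: l).getLast (by simp)) fun B hB => hbs B (by simp [hB])
    simp only [List.flatten_cons, List.cons_append, runBreaks, runBreaks_append_of_isChain R hB]
    split_ifs
    · exact ih'.cons _
    · exact ih'.cons_cons _

theorem leadingTerms_runs_flatten_sublist (bs : List (List ℕ))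
    (hbs : ∀ B ∈ bs, B ≠ [] ∧ B.IsChain (R · ·)) :
    (leadingTerms (runs R bs.flatten)).Sublist (leadingTerms bs) := by
  match bs, hbs with
  | [], _ => simp [runs, leadingTerms]
  | [] :: _, hbs => exact absurd rfl (hbs [] (by simp)).1
  | (b :: l) :: bs, hbs =>
    have hB := (hbs (b :: l) (by simp)).2
    simp only [List.flatten_cons, List.cons_append, runs, leadingTerms_runsAux,
      runBreaks_append_of_isChain R hB]
    exact (runBreaks_flatten_sublist R _ bs fun B hB => hbs B (by simp [hB])).cons_cons _

end Runs

open Finset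

theorem isChain_lt_of_mem_strictRuns {l B : List ℕ} (hB : B ∈ strictRuns l) :
    B ≠ [] ∧ B.IsChain (· < ·) := by
  simpa using isChain_of_mem_runs _ hB

theorem flatten_strictRuns (l : List ℕ) : (strictRuns l).flatten = l :=
  flatten_runs _ l

theorem flattenedStrict_flatten {bs : List (List ℕ)} (hbs : ∀ B ∈ bs, B ≠ [] ∧ B.IsChain (· < ·))
    (hheads : (leadingTerms bs).IsChain (· < ·)) : FlattenedStrict bs.flatten :=
  hheads.sublist (leadingTerms_runs_flatten_sublist _ bs (by simpa using hbs))

theorem count_flatten_eq_countP_mem {α : Type*} [DecidableEq α] {L : List (List α)}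
    (hL : ∀ B ∈ L, B.Nodup) (v : α) : L.flatten.count v = L.countP (v ∈ ·) := by
  induction L with
  | nil => rfl
  | cons B L ih =>
    simp only [List.flatten_cons, List.count_append, List.countP_cons, (hL B (by simp)).count,
      ih fun B hB => hL B (by simp [hB])]
    split_ifs <;> simp_all [add_comm]

theorem count_le_card_filter_le_of_flattenedStrict {l : List ℕ} (hl : FlattenedStrict l)
    (v : ℕ) : l.count v ≤ #{x ∈ l.toFinset | x ≤ v} := by
  have hruns : ∀ B ∈ strictRuns l, B.Pairwise (· < ·) := fun B hB =>
    List.isChain_iff_pairwise.mp (isChain_lt_of_mem_strictRuns hB).2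
  set heads := ((strictRuns l).filter (v ∈ ·)).map List.headI
  have hcount : l.count v = heads.length := by
    calc l.count v = (strictRuns l).flatten.count v := by rw [flatten_strictRuns]
      _ = (strictRuns l).countP (v ∈ ·) :=
          count_flatten_eq_countP_mem (fun B hB => (hruns B hB).nodup) v
      _ = heads.length := by rw [List.length_map, List.countP_eq_length_filter]
  have hnodup : heads.Nodup :=
    ((List.isChain_iff_pairwise.mp hl).sublist (List.filter_sublist.map _)).nodup
  have hsub : heads.toFinset ⊆ {x ∈ l.toFinset | x ≤ v} := by
    intro x hx
    obtain ⟨B, hB, rfl⟩ := List.mem_map.mp (List.mem_toFinset.mp hx)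
    obtain ⟨hBl, hvB⟩ := List.mem_filter.mp hB
    obtain ⟨b, t, rfl⟩ := List.exists_cons_of_ne_nil (isChain_lt_of_mem_strictRuns hBl).1
    have hbl : b ∈ l := by
      rw [← flatten_strictRuns l]
      exact List.mem_flatten.mpr ⟨_, hBl, List.mem_cons_self⟩
    have hbv : b ≤ v := by
      rcases List.mem_cons.mp (of_decide_eq_true hvB) with rfl | hvt
      · rfl
      · exact (List.rel_of_pairwise_cons (hruns _ hBl) hvt).le
    simpa [hbl] using hbv
  calc l.count v = #heads.toFinset := by rw [List.toFinset_card_of_nodup hnodup, hcount]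
    _ ≤ _ := card_le_card hsub

theorem card_filter_le_sort_getElem_le {α : Type*} [LinearOrder α] (s : Finset α) {i : ℕ}
    (hi : i < (s.sort (· ≤ ·)).length) : #{x ∈ s | x ≤ (s.sort (· ≤ ·))[i]} ≤ i + 1 := by
  set V := s.sort (· ≤ ·)
  have hsub : {x ∈ s | x ≤ V[i]} ⊆ (V.take (i + 1)).toFinset := by
    intro x hx
    obtain ⟨hxs, hxi⟩ := mem_filter.mp hx
    obtain ⟨j, hj, rfl⟩ := List.getElem_of_mem (mem_sort _ |>.mpr hxs : x ∈ V)
    have hji : j ≤ i := by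
      by_contra! hij
      exact (lt_irrefl _ ((s.sortedLT_sort.strictMono_get (Fin.mk_lt_mk.mpr hij)).trans_le hxi))
    exact List.mem_toFinset.mpr (List.mem_take_iff_getElem.mpr ⟨j, by omega, rfl⟩)
  calc #{x ∈ s | x ≤ V[i]} ≤ (V.take (i + 1)).length :=
        (card_le_card hsub).trans (List.toFinset_card_le _)
    _ ≤ i + 1 := by simp

theorem reducedContent_getElem_le_of_flattenedStrict {l : List ℕ} (hl : FlattenedStrict l)
    (i : ℕ) (hi : i < (reducedContent l).length) : (reducedContent l)[i] ≤ i + 1 := by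
  simp only [reducedContent, List.getElem_map]
  exact (count_le_card_filter_le_of_flattenedStrict hl _).trans
    (card_filter_le_sort_getElem_le _ (by simpa [reducedContent] using hi))

section Construction

variable (c : ℕ → ℕ) (k : ℕ)

/-- The `j`-th smallest value (counting from `0`) of a Fubini ranking whose distinct values
occur `c 0, c 1, …` times. -/
def fubiniValue (j : ℕ) : ℕ := ∑ i ∈ range j, c i + 1

def stripe (i : ℕ) : List ℕ := (List.range' i (k - i)).filter (fun j => j < i + c j)

def stripeIndices : List ℕ := (List.range k).flatMap (stripe c k)

def flatFubini : List ℕ := (stripeIndices c k).map (fubiniValue c)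

variable {c k}

theorem strictMono_fubiniValue (hc : ∀ j, 0 < c j) : StrictMono (fubiniValue c) :=
  strictMono_nat_of_lt_succ fun j => by
    have := hc j
    simp only [fubiniValue, sum_range_succ]
    omega

theorem fubiniValue_le_sum {j : ℕ} (hj : j < k) (hc : 0 < c j) :
    fubiniValue c j ≤ ∑ i ∈ range k, c i := by
  have : ∑ i ∈ range (j + 1), c i ≤ ∑ i ∈ range k, c i :=
    sum_le_sum_of_subset (range_subset_range.mpr hj)
  rw [sum_range_succ] at this
  simp only [fubiniValue]
  omega

theorem mem_stripe {i j : ℕ} : j ∈ stripe c k i ↔ i ≤ j ∧ j < k ∧ j < i + c j := by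
  simp only [stripe, List.mem_filter, List.mem_range'_1, decide_eq_true_eq]
  omega

theorem pairwise_stripe (i : ℕ) : (stripe c k i).Pairwise (· < ·) :=
  (List.pairwise_lt_range' ..).filter _

theorem stripe_eq_cons {i : ℕ} (hi : i < k) (hc : 0 < c i) : ∃ t, stripe c k i = i :: t := by
  obtain ⟨m, hm⟩ : ∃ m, k - i = m + 1 := ⟨k - i - 1, by omega⟩
  simp [stripe, hm, List.range'_succ, hc]

theorem mem_stripeIndices (hc : ∀ j, 0 < c j) {j : ℕ} : j ∈ stripeIndices c k ↔ j < k := by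
  simp only [stripeIndices, List.mem_flatMap, List.mem_range, mem_stripe]
  exact ⟨fun ⟨_, _, _, hj, _⟩ => hj, fun hj => ⟨j, hj, le_rfl, hj, by simp [hc j]⟩⟩

theorem toFinset_stripeIndices (hc : ∀ j, 0 < c j) : (stripeIndices c k).toFinset = range k := by
  ext j
  simp [mem_stripeIndices hc]

theorem count_stripeIndices {j : ℕ} (hj : j < k) (hcj : c j ≤ j + 1) :
    (stripeIndices c k).count j = c j := by
  have hcountP : (List.range k).countP (j ∈ stripe c k ·) = #{i ∈ range k | j ∈ stripe c k i} := by
    simp [card_def, filter_val, List.countP_eq_length_filter, Multiset.range]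
  have hfilter : {i ∈ range k | j ∈ stripe c k i} = Ico (j + 1 - c j) (j + 1) := by
    ext i
    simp only [mem_filter, mem_range, mem_Ico, mem_stripe]
    omega
  rw [stripeIndices, List.flatMap_def,
    count_flatten_eq_countP_mem (by simpa using fun i _ => (pairwise_stripe i).nodup),
    List.countP_map, Function.comp_def, hcountP, hfilter, Nat.card_Ico]
  omega

theorem length_stripeIndices (hc : ∀ j, 0 < c j) (hle : ∀ j, c j ≤ j + 1) :
    (stripeIndices c k).length = ∑ j ∈ range k, c j := by
  rw [← List.sum_toFinset_count_eq_length, toFinset_stripeIndices hc]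
  exact sum_congr rfl fun j hj => count_stripeIndices (mem_range.mp hj) (hle j)

theorem countP_lt_stripeIndices (hc : ∀ j, 0 < c j) (hle : ∀ j, c j ≤ j + 1) {j : ℕ}
    (hj : j < k) : (stripeIndices c k).countP (· < j) = ∑ i ∈ range j, c i := by
  rw [← sum_filter_count_eq_countP, toFinset_stripeIndices hc]
  have : {i ∈ range k | i < j} = range j := by
    ext i
    simp only [mem_filter, mem_range]
    omega
  rw [this]
  exact sum_congr rfl fun i hi => count_stripeIndices (by simp at hi; omega) (hle i)

theorem mem_flatFubini (hc : ∀ j, 0 < c j) {x : ℕ} :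
    x ∈ flatFubini c k ↔ ∃ j < k, fubiniValue c j = x := by
  simp [flatFubini, mem_stripeIndices hc]

theorem isFubini_flatFubini (hc : ∀ j, 0 < c j) (hle : ∀ j, c j ≤ j + 1) :
    IsFubini (∑ j ∈ range k, c j) (flatFubini c k) := by
  refine ⟨by simp [flatFubini, length_stripeIndices hc hle], ?_, ?_⟩
  · rintro x hx
    obtain ⟨j, hj, rfl⟩ := (mem_flatFubini hc).mp hx
    exact ⟨by simp [fubiniValue], fubiniValue_le_sum hj (hc j)⟩
  · rintro x hx
    obtain ⟨j, hj, rfl⟩ := (mem_flatFubini hc).mp hx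
    rw [flatFubini, List.countP_map]
    simp only [Function.comp_def, (strictMono_fubiniValue hc).lt_iff_lt]
    rw [countP_lt_stripeIndices hc hle hj, fubiniValue, add_comm]

theorem reducedContent_flatFubini (hc : ∀ j, 0 < c j) (hle : ∀ j, c j ≤ j + 1) :
    reducedContent (flatFubini c k) = (List.range k).map c := by
  have hmono := strictMono_fubiniValue hc
  have hvalues : (flatFubini c k).toFinset.sort (· ≤ ·) = (List.range k).map (fubiniValue c) := by
    have : (flatFubini c k).toFinset = ((List.range k).map (fubiniValue c)).toFinset := by
      ext x
      simp [mem_flatFubini hc]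
    rw [this]
    exact (List.toFinset_sort _ (List.nodup_range.map hmono.injective)).mpr
      (List.pairwise_map.mpr (List.pairwise_lt_range.imp fun h => (hmono h).le))
  rw [reducedContent, hvalues, List.map_map]
  refine List.map_congr_left fun j hj => ?_
  rw [Function.comp_apply, flatFubini, List.count_map_of_injective _ _ hmono.injective,
    count_stripeIndices (List.mem_range.mp hj) (hle j)]

theorem flattenedStrict_flatFubini (hc : ∀ j, 0 < c j) : FlattenedStrict (flatFubini c k) := by
  have hmono := strictMono_fubiniValue hc
  rw [flatFubini, stripeIndices, List.map_flatMap, List.flatMap_def]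
  apply flattenedStrict_flatten
  · simp only [List.mem_map, List.mem_range]
    rintro _ ⟨i, hi, rfl⟩
    obtain ⟨t, ht⟩ := stripe_eq_cons hi (hc i)
    refine ⟨by simp [ht], List.isChain_iff_pairwise.mpr ?_⟩
    exact List.pairwise_map.mpr ((pairwise_stripe i).imp fun h => hmono h)
  · have : leadingTerms ((List.range k).map fun i => (stripe c k i).map (fubiniValue c)) =
        (List.range k).map (fubiniValue c) := by
      simp only [leadingTerms, List.map_map]
      refine List.map_congr_left fun i hi => ?_
      obtain ⟨t, ht⟩ := stripe_eq_cons (List.mem_range.mp hi) (hc i)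
      simp [ht]
    rw [this, List.isChain_iff_pairwise]
    exact List.pairwise_map.mpr (List.pairwise_lt_range.imp fun h => hmono h)

end Construction

theorem flat_runs_reducedContent_iff (n : ℕ) (a : List ℕ)
    (ha : ∀ x ∈ a, 0 < x) (hsum : a.sum = n) :
    (∃ l : List ℕ, IsFubini n l ∧ FlattenedStrict l ∧ reducedContent l = a) ↔
      ∀ i (h : i < a.length), a[i] ≤ i + 1 := by
  constructor
  · rintro ⟨l, -, hl, rfl⟩
    exact reducedContent_getElem_le_of_flattenedStrict hl
  · intro hle
    -- padding `a` with parts equal to `1` keeps both hypotheses true at every index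
    set c : ℕ → ℕ := fun j => a.getD j 1
    have hc : ∀ j, 0 < c j := fun j => by
      by_cases hj : j < a.length <;> simp [c, hj, ha]
    have hcle : ∀ j, c j ≤ j + 1 := fun j => by
      by_cases hj : j < a.length <;> simp [c, hj, hle]
    have hsum' : ∑ j ∈ range a.length, c j = n := by
      rw [← hsum, Finset.sum_range]
      simp [c]
    have hmap : (List.range a.length).map c = a := by
      apply List.ext_getElem <;> simp +contextual [c]
    exact ⟨flatFubini c a.length, hsum' ▸ isFubini_flatFubini hc hcle,
      flattenedStrict_flatFubini hc, by rw [reducedContent_flatFubini hc hcle, hmap]⟩
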